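/- Let A be a super convex space and J an ℝ∞-generalized element of A (a countably affine, weakly averaging, order-preserving functional on Hom_SCvx(A, ℝ∞) commuting with countably affine endomaps of ℝ∞). If m : A → ℝ∞ is countably affine with image equal to the half-open interval [u, v) where u > −∞ and v < ∞, then u ≤ J(m) < v, so J(m) ∈ Image(m). -/

import Mathlib

open Filter

/-- `ℝ∞ = ℝ ∪ {∞}`, the one point extension of the real line. -/
abbrev Rinf : Type := WithTop ℝ

/-- A countable partition of one: a sequence in `[0,1]` summing to `1`. -/
def IsPartition (α : ℕ → ℝ) : Prop := (∀ i, α i ∈ Set.Icc (0 : ℝ) 1) ∧ HasSum α 1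

open Classical in
/-- The countable convex combination `∑ α_i u_i` on `ℝ∞`: the limit of the partial sums
`∑_{i<N} α_i u_i` when every `u i` with nonzero coefficient is real and this limit exists
in `ℝ`, and `∞` otherwise (terms with zero coefficient are ignored, i.e. `0·∞ = 0`). -/
noncomputable def scomb (α : ℕ → ℝ) (u : ℕ → Rinf) : Rinf :=
  if h : (∀ i, α i ≠ 0 → u i ≠ ⊤) ∧
      ∃ L : ℝ, Tendsto (fun N => ∑ i ∈ Finset.range N, α i * (u i).untopD 0) atTop (nhds L)
  then ((h.2.choose : ℝ) : Rinf) else ⊤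

/-- A super convex space: a set with countable convex combinations satisfying the
projection and associativity axioms. -/
structure SuperConvexSpace (A : Type*) where
  comb : (ℕ → ℝ) → (ℕ → A) → A
  proj : ∀ (j : ℕ) (u : ℕ → A), comb (fun i => if i = j then 1 else 0) u = u j
  assoc : ∀ (α : ℕ → ℝ) (β : ℕ → ℕ → ℝ) (u : ℕ → A), IsPartition α →
    (∀ i, IsPartition (β i)) →
    comb α (fun i => comb (β i) u) = comb (fun j => ∑' i, α i * β i j) u

/-- A map `m : A → ℝ∞` is countably affine if it preserves all countable convex
combinations. -/
def CountablyAffine {A : Type*} (S : SuperConvexSpace A) (m : A → Rinf) : Prop :=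
  ∀ (α : ℕ → ℝ), IsPartition α → ∀ u : ℕ → A,
    m (S.comb α u) = scomb α (fun i => m (u i))

/-- A countably affine endomap of `ℝ∞`. -/
def AffEndo (g : Rinf → Rinf) : Prop :=
  ∀ (α : ℕ → ℝ), IsPartition α → ∀ u : ℕ → Rinf, g (scomb α u) = scomb α (fun i => g (u i))

/-! If `J m = v`, stretch `m` away from `v` by the homotheties `x ↦ v + 2^i (x - v)`. Each
stretched map still has `J`-value `v`, so the combination of these values with weights
`2^{-(i+1)}` is `v`. But at every point `a` the values `m a < v` are pushed down so fast that
the same combination of `2^i (m a - v)` diverges to `-∞`, which `scomb` reports as `∞`, and `J` of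
that constant is `∞`. The non-strict bounds `u ≤ J m ≤ v` come from comparing `m` with constants. -/

lemma IsPartition.of_nonneg {α : ℕ → ℝ} (h0 : ∀ i, 0 ≤ α i) (h1 : HasSum α 1) :
    IsPartition α :=
  ⟨fun i => ⟨h0 i, le_hasSum h1 i fun j _ => h0 j⟩, h1⟩

section scomb

variable {α : ℕ → ℝ} {u : ℕ → Rinf}

lemma scomb_eq_coe_iff {L : ℝ} :
    scomb α u = L ↔ (∀ i, α i ≠ 0 → u i ≠ ⊤) ∧
      Tendsto (fun N => ∑ i ∈ Finset.range N, α i * (u i).untopD 0) atTop (nhds L) := by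
  unfold scomb
  split_ifs with h
  · rw [WithTop.coe_inj]
    exact ⟨fun hL => ⟨h.1, hL ▸ h.2.choose_spec⟩,
      fun hL => tendsto_nhds_unique h.2.choose_spec hL.2⟩
  · exact ⟨fun h' => (WithTop.top_ne_coe h').elim, fun hL => (h ⟨hL.1, L, hL.2⟩).elim⟩

lemma scomb_eq_top_of_tendsto_atBot
    (h : Tendsto (fun N => ∑ i ∈ Finset.range N, α i * (u i).untopD 0) atTop atBot) :
    scomb α u = ⊤ := by
  unfold scomb
  rw [dif_neg]
  rintro ⟨-, L, hL⟩
  exact not_tendsto_atBot_of_tendsto_nhds hL h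

lemma scomb_const (hα : HasSum α 1) (c : ℝ) : scomb α (fun _ => (c : Rinf)) = c := by
  refine scomb_eq_coe_iff.mpr ⟨fun _ _ => WithTop.coe_ne_top, ?_⟩
  simpa only [WithTop.untopD_coe, ← Finset.sum_mul, one_mul] using
    hα.tendsto_sum_nat.mul_const c

lemma scomb_map_affine_of_eq_coe (hα : HasSum α 1) (a b : ℝ) {L : ℝ} (h : scomb α u = L) :
    scomb α (fun i => (u i).map (fun t => a * t + b)) = ↑(a * L + b) := by
  obtain ⟨hfin, hL⟩ := scomb_eq_coe_iff.mp h
  have hsum : ∀ N, ∑ i ∈ Finset.range N, α i * ((u i).map (fun t => a * t + b)).untopD 0 =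
      a * ∑ i ∈ Finset.range N, α i * (u i).untopD 0 + b * ∑ i ∈ Finset.range N, α i := by
    intro N
    rw [Finset.mul_sum, Finset.mul_sum, ← Finset.sum_add_distrib]
    refine Finset.sum_congr rfl fun i _ => ?_
    by_cases hi : α i = 0
    · simp [hi]
    · obtain ⟨x, hx⟩ := WithTop.ne_top_iff_exists.mp (hfin i hi)
      rw [← hx, WithTop.map_coe, WithTop.untopD_coe, WithTop.untopD_coe]
      ring
  refine scomb_eq_coe_iff.mpr ⟨fun i hi => by simpa using hfin i hi, ?_⟩
  simp only [hsum]
  simpa only [mul_one] using (hL.const_mul a).add (hα.tendsto_sum_nat.const_mul b)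

end scomb

lemma affEndo_map_affine {a : ℝ} (ha : a ≠ 0) (b : ℝ) :
    AffEndo (WithTop.map (fun t => a * t + b)) := by
  intro α hα u
  by_cases htop : scomb α u = ⊤
  · rw [htop, WithTop.map_top, eq_comm]
    by_contra hfin
    obtain ⟨L, hL⟩ := WithTop.ne_top_iff_exists.mp hfin
    -- undo the map with the inverse affine map, which makes `scomb α u` finite
    have hinv := scomb_map_affine_of_eq_coe hα.2 a⁻¹ (-(a⁻¹ * b)) hL.symm
    have hcancel : (fun i => ((u i).map (fun t => a * t + b)).map
        (fun t => a⁻¹ * t + -(a⁻¹ * b))) = u := by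
      funext i
      induction u i using WithTop.recTopCoe with
      | top => rfl
      | coe x => simp only [WithTop.map_coe]; congr 1; field_simp; ring
    rw [hcancel, htop] at hinv
    exact WithTop.top_ne_coe hinv
  · obtain ⟨L, hL⟩ := WithTop.ne_top_iff_exists.mp htop
    rw [← hL, WithTop.map_coe, scomb_map_affine_of_eq_coe hα.2 a b hL.symm]

lemma countablyAffine_const {A : Type*} (S : SuperConvexSpace A) (c : ℝ) :
    CountablyAffine S (fun _ => (c : Rinf)) :=
  fun _ hα _ => (scomb_const hα.2 c).symm

lemma AffEndo.comp_countablyAffine {A : Type*} {S : SuperConvexSpace A} {g : Rinf → Rinf}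
    {m : A → Rinf} (hg : AffEndo g) (hm : CountablyAffine S m) : CountablyAffine S (g ∘ m) :=
  fun α hα w => by simp only [Function.comp_apply, hm α hα w, hg α hα]

lemma scomb_homothety_eq_top {x v : ℝ} (hxv : x < v) :
    scomb (fun i => 1 / 2 / 2 ^ i)
      (fun i => WithTop.map (fun t => 2 ^ i * t + (1 - 2 ^ i) * v) (x : Rinf)) = ⊤ := by
  apply scomb_eq_top_of_tendsto_atBot
  have hterm : ∀ i : ℕ, 1 / 2 / 2 ^ i *
      (WithTop.map (fun t => 2 ^ i * t + (1 - 2 ^ i) * v) (x : Rinf)).untopD 0 =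
      (x - v) / 2 + v * (1 / 2 / 2 ^ i) := by
    intro i
    rw [WithTop.map_coe, WithTop.untopD_coe]
    field_simp
    ring
  simp only [hterm, Finset.sum_add_distrib, Finset.sum_const, Finset.card_range, nsmul_eq_mul,
    ← Finset.mul_sum]
  exact (tendsto_natCast_atTop_atTop.atTop_mul_const_of_neg (by linarith)).atBot_add
    ((hasSum_geometric_two' 1).tendsto_sum_nat.const_mul v)

section GeneralizedElement

variable {A : Type*} (S : SuperConvexSpace A) (J : (A → Rinf) → Rinf)

def IsWeaklyAveraging : Prop := ∀ w : Rinf, J (fun _ => w) = w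

def IsOrderPreserving : Prop :=
  ∀ m₁ m₂ : A → Rinf, CountablyAffine S m₁ → CountablyAffine S m₂ →
    (∀ a, m₁ a ≤ m₂ a) → J m₁ ≤ J m₂

def PreservesScomb : Prop :=
  ∀ (α : ℕ → ℝ), IsPartition α → ∀ m : ℕ → A → Rinf, (∀ i, CountablyAffine S (m i)) →
    J (fun a => scomb α (fun i => m i a)) = scomb α (fun i => J (m i))

def CommutesWithAffEndo : Prop :=
  ∀ g : Rinf → Rinf, AffEndo g → ∀ m : A → Rinf, CountablyAffine S m → J (g ∘ m) = g (J m)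

variable {S J} {m : A → Rinf}

lemma coe_le_apply_of_forall_coe_le (hJavg : IsWeaklyAveraging J)
    (hJmono : IsOrderPreserving S J) (hm : CountablyAffine S m) {c : ℝ}
    (h : ∀ a, (c : Rinf) ≤ m a) : (c : Rinf) ≤ J m := by
  simpa only [hJavg _] using hJmono _ m (countablyAffine_const S c) hm h

lemma apply_le_coe_of_forall_le_coe (hJavg : IsWeaklyAveraging J)
    (hJmono : IsOrderPreserving S J) (hm : CountablyAffine S m) {c : ℝ}
    (h : ∀ a, m a ≤ c) : J m ≤ c := by
  simpa only [hJavg _] using hJmono m _ hm (countablyAffine_const S c) h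

lemma apply_ne_coe_of_forall_lt_coe (hJcomb : PreservesScomb S J)
    (hJavg : IsWeaklyAveraging J) (hJnat : CommutesWithAffEndo S J)
    (hm : CountablyAffine S m) {v : ℝ} (h : ∀ a, m a < v) : J m ≠ v := by
  intro hJv
  let g : ℕ → Rinf → Rinf := fun i => WithTop.map (fun t => 2 ^ i * t + (1 - 2 ^ i) * v)
  have hg : ∀ i, AffEndo (g i) := fun i => affEndo_map_affine (by positivity) _
  have hα : IsPartition (fun i : ℕ => 1 / 2 / 2 ^ i) :=
    .of_nonneg (fun i => by positivity) (hasSum_geometric_two' 1)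
  have hJg : ∀ i, J (g i ∘ m) = v := fun i => by
    rw [hJnat _ (hg i) m hm, hJv]
    simp only [g, WithTop.map_coe, WithTop.coe_inj]
    ring
  have hdiverge : ∀ a, scomb (fun i : ℕ => 1 / 2 / 2 ^ i) (fun i => (g i ∘ m) a) = ⊤ := by
    intro a
    obtain ⟨x, hx⟩ := WithTop.ne_top_iff_exists.mp (h a).ne_top
    simp only [Function.comp_apply, ← hx]
    exact scomb_homothety_eq_top (WithTop.coe_lt_coe.mp (hx ▸ h a))
  have hcomb := hJcomb _ hα (fun i => g i ∘ m) fun i => (hg i).comp_countablyAffine hm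
  simp only [hdiverge, hJavg ⊤, hJg, scomb_const hα.2] at hcomb
  exact WithTop.top_ne_coe hcomb

end GeneralizedElement

/-- If `J` is an `ℝ∞`-generalized element of `A` (countably affine, weakly averaging,
order-preserving, commuting with countably affine endomaps of `ℝ∞`) and `m` is countably
affine with image `[u, v) ⊆ ℝ`, then `u ≤ J(m) < v`, so `J(m) ∈ Image(m)`. -/
theorem stmt_5 {A : Type*} (S : SuperConvexSpace A) (J : (A → Rinf) → Rinf)
    (hJcomb : ∀ (α : ℕ → ℝ), IsPartition α → ∀ m : ℕ → A → Rinf,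
      (∀ i, CountablyAffine S (m i)) →
      J (fun a => scomb α (fun i => m i a)) = scomb α (fun i => J (m i)))
    (hJavg : ∀ w : Rinf, J (fun _ => w) = w)
    (hJmono : ∀ m₁ m₂ : A → Rinf, CountablyAffine S m₁ → CountablyAffine S m₂ →
      (∀ a, m₁ a ≤ m₂ a) → J m₁ ≤ J m₂)
    (hJnat : ∀ g : Rinf → Rinf, AffEndo g → ∀ m : A → Rinf, CountablyAffine S m →
      J (g ∘ m) = g (J m))
    (m : A → Rinf) (hm : CountablyAffine S m) (u v : ℝ)
    (hrange : Set.range m = (fun x : ℝ => (x : Rinf)) '' Set.Ico u v) :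
    (u : Rinf) ≤ J m ∧ J m < (v : Rinf) ∧ J m ∈ Set.range m := by
  have hbounds : ∀ a, (u : Rinf) ≤ m a ∧ m a < v := fun a => by
    obtain ⟨x, ⟨hux, hxv⟩, hx⟩ := hrange ▸ Set.mem_range_self a
    rw [← hx]
    exact ⟨WithTop.coe_le_coe.mpr hux, WithTop.coe_lt_coe.mpr hxv⟩
  have hu := coe_le_apply_of_forall_coe_le hJavg hJmono hm fun a => (hbounds a).1
  have hv : J m < v := lt_of_le_of_ne
    (apply_le_coe_of_forall_le_coe hJavg hJmono hm fun a => (hbounds a).2.le)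
    (apply_ne_coe_of_forall_lt_coe hJcomb hJavg hJnat hm fun a => (hbounds a).2)
  refine ⟨hu, hv, ?_⟩
  obtain ⟨t, ht⟩ := WithTop.ne_top_iff_exists.mp hv.ne_top
  rw [hrange, ← ht]
  exact ⟨t, ⟨WithTop.coe_le_coe.mp (ht ▸ hu), WithTop.coe_lt_coe.mp (ht ▸ hv)⟩, rfl⟩
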